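/- Let d ≥ 1 and let X be the cross-polytope point set on Ω^d consisting of the 4d points ±e_j and ±i·e_j for j = 1, …, d, where e_j is the j-th standard basis vector of ℂ^d. Then the separation distance of X equals π/2, the covering radius of X equals arccos(1/√(2d)), and hence the mesh ratio of X equals (4/π)·arccos(1/√(2d)). -/

import Mathlib

noncomputable section
open MeasureTheory Metric MvPolynomial ENNReal

instance (d : ℕ) : MeasurableSpace (EuclideanSpace ℂ (Fin d)) := borel _
instance (d : ℕ) : BorelSpace (EuclideanSpace ℂ (Fin d)) := ⟨rfl⟩

/-- The complex unit sphere `Ω^d ⊆ ℂ^d`. -/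
abbrev CSph (d : ℕ) : Type := Metric.sphere (0 : EuclideanSpace ℂ (Fin d)) 1

instance (d : ℕ) : DecidableEq (CSph d) := Classical.decEq _

/-- The Hermitian inner product `⟨u,v⟩ = ∑ u_j conj (v_j)` on `ℂ^d`. -/
def hInnerC {d : ℕ} (u v : EuclideanSpace ℂ (Fin d)) : ℂ :=
  ∑ j, u j * (starRingEnd ℂ) (v j)

/-- geodesic distance on the complex sphere -/
def distC {d : ℕ} (u v : CSph d) : ℝ :=
  Real.arccos (hInnerC (u : EuclideanSpace ℂ (Fin d)) (v : EuclideanSpace ℂ (Fin d))).re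

/-- separation distance: minimal distance between distinct points of `X` -/
def sepD {α : Type*} (dst : α → α → ℝ) (X : Finset α) : ℝ :=
  sInf {r : ℝ | ∃ x ∈ X, ∃ y ∈ X, x ≠ y ∧ r = dst x y}

/-- covering radius: max over points of the sphere of the distance to `X` -/
def covD {α : Type*} (dst : α → α → ℝ) (X : Finset α) : ℝ :=
  sSup {r : ℝ | ∃ y : α, r = sInf {s : ℝ | ∃ x ∈ X, s = dst y x}}

/-- mesh ratio `ρ = 2h/δ` -/
def meshD {α : Type*} (dst : α → α → ℝ) (X : Finset α) : ℝ :=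
  2 * covD dst X / sepD dst X

/-- the cross-polytope points `±e_j, ±i·e_j` on `Ω^d` -/
def crossPt (d : ℕ) (j : Fin d) (k : Fin 4) : CSph d :=
  ⟨(![1, -1, Complex.I, -Complex.I] k) • EuclideanSpace.single j (1 : ℂ), by
    simp only [mem_sphere_iff_norm, sub_zero, norm_smul, EuclideanSpace.norm_single]
    fin_cases k <;> simp⟩

/-!
Against a cross-polytope point the real part of the inner product reads off one of
`±Re y_j, ±Im y_j`. Distinct cross-polytope points are orthogonal or antipodal, so
`δ = π/2`, attained by `e_1` and `i e_1`. A unit vector `y` has a coordinate with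
`|y_j|² ≥ 1/d`, so one of `±Re y_j, ±Im y_j` is at least `1/√(2d)`, whence
`h ≤ arccos (1/√(2d))`; equality holds at `(1 + i)/√(2d) · (1, …, 1)`, whose inner products
with the cross-polytope points all have real part `±1/√(2d)`.
-/

section PointSetGeometry

variable {α : Type*} (dst : α → α → ℝ) (X : Finset α)

lemma sepD_eq_of_forall_le_of_exists_eq {r : ℝ}
    (hle : ∀ x ∈ X, ∀ y ∈ X, x ≠ y → r ≤ dst x y)
    (hattained : ∃ x ∈ X, ∃ y ∈ X, x ≠ y ∧ dst x y = r) : sepD dst X = r := by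
  obtain ⟨x, hx, y, hy, hxy, rfl⟩ := hattained
  refine IsLeast.csInf_eq ⟨⟨x, hx, y, hy, hxy, rfl⟩, ?_⟩
  rintro _ ⟨x', hx', y', hy', hxy', rfl⟩
  exact hle x' hx' y' hy' hxy'

lemma covD_eq_of_forall_exists_le_of_exists_forall_le {r : ℝ}
    (hcover : ∀ y, ∃ x ∈ X, dst y x ≤ r)
    (hfar : ∃ y, ∀ x ∈ X, r ≤ dst y x) : covD dst X = r := by
  have hfinite : ∀ y, {s : ℝ | ∃ x ∈ X, s = dst y x}.Finite := fun y =>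
    (X.finite_toSet.image (dst y)).subset (by rintro _ ⟨x, hx, rfl⟩; exact ⟨x, hx, rfl⟩)
  obtain ⟨y₀, hy₀⟩ := hfar
  obtain ⟨x₀, hx₀, hx₀le⟩ := hcover y₀
  have hleast : IsLeast {s | ∃ x ∈ X, s = dst y₀ x} r :=
    ⟨⟨x₀, hx₀, le_antisymm (hy₀ x₀ hx₀) hx₀le⟩, by rintro _ ⟨x, hx, rfl⟩; exact hy₀ x hx⟩
  refine IsGreatest.csSup_eq ⟨⟨y₀, hleast.csInf_eq.symm⟩, ?_⟩
  rintro _ ⟨y, rfl⟩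
  obtain ⟨x, hx, hxle⟩ := hcover y
  exact csInf_le_of_le (hfinite y).bddBelow ⟨x, hx, rfl⟩ hxle

end PointSetGeometry

def crossPolytope (d : ℕ) : Finset (CSph d) :=
  Finset.image (fun p : Fin d × Fin 4 => crossPt d p.1 p.2) Finset.univ

@[simp]
lemma mem_crossPolytope {d : ℕ} {x : CSph d} :
    x ∈ crossPolytope d ↔ ∃ j k, crossPt d j k = x := by
  simp [crossPolytope]

lemma crossPt_apply {d : ℕ} (j i : Fin d) (k : Fin 4) :
    (crossPt d j k : EuclideanSpace ℂ (Fin d)) i =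
      if i = j then ![1, -1, Complex.I, -Complex.I] k else 0 := by
  simp [crossPt]

lemma re_hInnerC_crossPt {d : ℕ} (y : EuclideanSpace ℂ (Fin d)) (j : Fin d) (k : Fin 4) :
    (hInnerC (d := d) y (crossPt d j k)).re =
      ![(y j).re, -(y j).re, (y j).im, -(y j).im] k := by
  rw [hInnerC, Finset.sum_eq_single j (fun i _ hij => by simp [crossPt_apply, hij]) (by simp)]
  fin_cases k <;> simp [crossPt_apply]

lemma re_hInnerC_crossPt_nonpos {d : ℕ} {j j' : Fin d} {k k' : Fin 4}
    (hne : crossPt d j k ≠ crossPt d j' k') :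
    (hInnerC (d := d) (crossPt d j k) (crossPt d j' k')).re ≤ 0 := by
  rw [re_hInnerC_crossPt]
  by_cases hj : j' = j
  · subst hj
    have hk : k ≠ k' := fun h => hne (h ▸ rfl)
    fin_cases k <;> fin_cases k' <;> simp_all [crossPt_apply]
  · fin_cases k' <;> simp [crossPt_apply, hj]

lemma sepD_crossPolytope {d : ℕ} (hd : 0 < d) : sepD distC (crossPolytope d) = Real.pi / 2 := by
  refine sepD_eq_of_forall_le_of_exists_eq _ _ ?_
    ⟨crossPt d ⟨0, hd⟩ 0, by simp, crossPt d ⟨0, hd⟩ 2, by simp, ?_, ?_⟩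
  · simp only [mem_crossPolytope]
    rintro _ ⟨j, k, rfl⟩ _ ⟨j', k', rfl⟩ hne
    rw [distC, ← Real.arccos_zero]
    exact Real.arccos_le_arccos (re_hInnerC_crossPt_nonpos hne)
  · intro h
    simpa [Complex.ext_iff, crossPt_apply] using
      congrArg (fun z : CSph d => (z : EuclideanSpace ℂ (Fin d)) ⟨0, hd⟩) h
  · simp [distC, re_hInnerC_crossPt, crossPt_apply]

lemma CSph.exists_inv_le_norm_sq {d : ℕ} (hd : 0 < d) (y : CSph d) :
    ∃ j, (d : ℝ)⁻¹ ≤ ‖(y : EuclideanSpace ℂ (Fin d)) j‖ ^ 2 := by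
  have hsum : ∑ j, ‖(y : EuclideanSpace ℂ (Fin d)) j‖ ^ 2 = ∑ _j : Fin d, (d : ℝ)⁻¹ := by
    rw [← EuclideanSpace.norm_sq_eq, norm_eq_of_mem_sphere y]
    simp [(Nat.cast_pos.mpr hd).ne']
  obtain ⟨j, -, hj⟩ := Finset.exists_le_of_sum_le ⟨⟨0, hd⟩, Finset.mem_univ _⟩ hsum.ge
  exact ⟨j, hj⟩

lemma Complex.exists_le_re_or_im {z : ℂ} {c : ℝ} (hz : 2 * c ^ 2 ≤ ‖z‖ ^ 2) :
    ∃ k : Fin 4, c ≤ ![z.re, -z.re, z.im, -z.im] k := by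
  by_contra! h
  have hre : |z.re| < c := abs_lt.mpr ⟨neg_lt.mp (h 1), h 0⟩
  have him : |z.im| < c := abs_lt.mpr ⟨neg_lt.mp (h 3), h 2⟩
  rw [Complex.sq_norm, Complex.normSq_apply] at hz
  nlinarith [abs_mul_abs_self z.re, abs_mul_abs_self z.im, abs_nonneg z.re, abs_nonneg z.im]

lemma exists_crossPt_le_re_hInnerC {d : ℕ} (hd : 0 < d) (y : CSph d) :
    ∃ j k, 1 / Real.sqrt (2 * d) ≤ (hInnerC (d := d) y (crossPt d j k)).re := by
  obtain ⟨j, hj⟩ := CSph.exists_inv_le_norm_sq hd y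
  have hc : 2 * (1 / Real.sqrt (2 * d)) ^ 2 = (d : ℝ)⁻¹ := by
    rw [div_pow, Real.sq_sqrt (by positivity)]
    field_simp
  obtain ⟨k, hk⟩ := Complex.exists_le_re_or_im (hc.trans_le hj)
  exact ⟨j, k, by rwa [re_hInnerC_crossPt]⟩

def diagonalPt (d : ℕ) (hd : 0 < d) : CSph d :=
  ⟨WithLp.toLp 2 fun _ => ⟨1 / Real.sqrt (2 * d), 1 / Real.sqrt (2 * d)⟩, by
    rw [mem_sphere_zero_iff_norm, ← pow_eq_one_iff_of_nonneg (norm_nonneg _) two_ne_zero,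
      EuclideanSpace.norm_sq_eq]
    simp only [Complex.sq_norm, Complex.normSq_apply, Finset.sum_const, Finset.card_univ,
      Fintype.card_fin, nsmul_eq_mul]
    field_simp
    rw [Real.sq_sqrt (by positivity)]
    ring⟩

lemma covD_crossPolytope {d : ℕ} (hd : 0 < d) :
    covD distC (crossPolytope d) = Real.arccos (1 / Real.sqrt (2 * d)) := by
  refine covD_eq_of_forall_exists_le_of_exists_forall_le _ _ (fun y => ?_) ⟨diagonalPt d hd, ?_⟩
  · obtain ⟨j, k, hjk⟩ := exists_crossPt_le_re_hInnerC hd y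
    exact ⟨crossPt d j k, by simp, Real.arccos_le_arccos hjk⟩
  · simp only [mem_crossPolytope]
    rintro _ ⟨j, k, rfl⟩
    refine Real.arccos_le_arccos ?_
    rw [re_hInnerC_crossPt]
    fin_cases k <;> simp [diagonalPt]

/-- separation distance, covering radius and mesh ratio of the
cross-polytope point set on `Ω^d`. -/
theorem crossPolytope_geometry (d : ℕ) (hd : 1 ≤ d) :
    sepD distC (Finset.image (fun p : Fin d × Fin 4 => crossPt d p.1 p.2) Finset.univ) =
        Real.pi / 2 ∧
      covD distC (Finset.image (fun p : Fin d × Fin 4 => crossPt d p.1 p.2) Finset.univ) =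
        Real.arccos (1 / Real.sqrt (2 * (d : ℝ))) ∧
      meshD distC (Finset.image (fun p : Fin d × Fin 4 => crossPt d p.1 p.2) Finset.univ) =
        (4 / Real.pi) * Real.arccos (1 / Real.sqrt (2 * (d : ℝ))) := by
  have hsep := sepD_crossPolytope hd
  have hcov := covD_crossPolytope hd
  refine ⟨hsep, hcov, ?_⟩
  rw [meshD, ← crossPolytope, hsep, hcov]
  field_simp
  ring
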